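/- A subspace V⁺ ⊆ W ⊕ W* of dimension n on which β is positive definite is exactly the graph of a map of the form x ↦ g(x,·) + B(x,·): for every such V⁺ there exist a unique positive definite symmetric bilinear form g on W and a unique alternating bilinear form B on W such that V⁺ = {x ⊕ (g(x,·) + B(x,·)) : x ∈ W}; and conversely, for every such pair (g, B) the set {x ⊕ (g(x,·) + B(x,·)) : x ∈ W} is an n-dimensional subspace of W ⊕ W* on which β is positive definite. Thus generalised Riemannian metrics on W ⊕ W* (maximal positive definite subspaces) correspond bijectively to pairs (g, B). -/

import Mathlib

/-!
On a graph `{x ⊕ P x}` the quadratic form of `β` is `x ↦ P x x`, so `β` is positive definite there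
exactly when the symmetric part of `P` is; a bilinear form splits uniquely into a symmetric and an
alternating part, and the latter does not contribute to `P x x`. Conversely, `β` vanishes on
`0 ⊕ W*`, so a `β`-positive definite subspace meets it trivially; if it has dimension `n`, it
projects isomorphically onto `W` and is therefore the graph of a map `W → W*`.
-/

open Module

/-- The canonical split-signature pairing `β` on `W ⊕ W*`,
`β(x ⊕ ξ, y ⊕ η) = (ξ(y) + η(x))/2`. -/
noncomputable def genBeta {W : Type*} [AddCommGroup W] [Module ℝ W]
    (u v : W × Module.Dual ℝ W) : ℝ :=
  (u.2 v.1 + v.2 u.1) / 2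

/-- The graph `{x ⊕ P(x,·)}` of a bilinear form `P` on `W`, as a subspace of `W ⊕ W*`. -/
noncomputable def genGraph {W : Type*} [AddCommGroup W] [Module ℝ W]
    (P : W →ₗ[ℝ] W →ₗ[ℝ] ℝ) : Submodule ℝ (W × Module.Dual ℝ W) :=
  LinearMap.range (LinearMap.prod (LinearMap.id : W →ₗ[ℝ] W) P)

lemma LinearMap.graph_injective {R M M₂ : Type*} [Semiring R] [AddCommMonoid M]
    [AddCommMonoid M₂] [Module R M] [Module R M₂] :
    Function.Injective (LinearMap.graph : (M →ₗ[R] M₂) → Submodule R (M × M₂)) := by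
  intro f g hfg
  ext x
  exact (hfg ▸ (f.mem_graph_iff (x, f x)).2 rfl : (x, f x) ∈ g.graph)

lemma LinearMap.finrank_graph {K M M₂ : Type*} [Field K] [AddCommGroup M] [AddCommGroup M₂]
    [Module K M] [Module K M₂] (f : M →ₗ[K] M₂) : finrank K f.graph = finrank K M := by
  rw [LinearMap.graph_eq_range_prod, LinearMap.finrank_range_of_inj]
  exact fun x y hxy => congrArg Prod.fst hxy

section SymmetricAlternating

variable {R M : Type*} [CommRing R] [AddCommGroup M] [Module R M]

lemma LinearMap.IsAlt.add_apply_self {g B : M →ₗ[R] M →ₗ[R] R} (hB : B.IsAlt) (x : M) :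
    (g + B) x x = g x x := by
  rw [LinearMap.add_apply, LinearMap.add_apply, hB x, add_zero]

variable [Invertible (2 : R)]

lemma LinearMap.IsAlt.eq_zero_of_symm {B : M →ₗ[R] M →ₗ[R] R} (hB : B.IsAlt)
    (hsymm : ∀ x y, B x y = B y x) : B = 0 := by
  ext x y
  have hneg : -B x y = B x y := (hB.neg x y).trans (hsymm y x)
  have htwice : (2 : R) * B x y = 0 := by
    rw [two_mul]
    nth_rewrite 1 [← hneg]
    exact neg_add_cancel _
  calc B x y = ⅟2 * (2 * B x y) := (invOf_mul_cancel_left _ _).symm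
    _ = 0 := by rw [htwice, mul_zero]

lemma eq_of_symm_add_isAlt {g B g' B' : M →ₗ[R] M →ₗ[R] R} (hg : ∀ x y, g x y = g y x)
    (hB : B.IsAlt) (hg' : ∀ x y, g' x y = g' y x) (hB' : B'.IsAlt) (h : g + B = g' + B') :
    g = g' ∧ B = B' := by
  have hdiff : g - g' = B' - B :=
    (sub_eq_sub_iff_add_eq_add (G := M →ₗ[R] M →ₗ[R] R)).2 (h.trans (add_comm _ _))
  have hsymm : ∀ x y, (g - g') x y = (g - g') y x := fun x y => by
    simp only [LinearMap.sub_apply, hg x y, hg' x y]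
  have halt : (g - g').IsAlt := fun x => by simp [hdiff, hB x, hB' x]
  have hgg' : g = g' := sub_eq_zero.1 (halt.eq_zero_of_symm hsymm)
  exact ⟨hgg', (sub_eq_zero.1 (hdiff ▸ sub_eq_zero.2 hgg')).symm⟩

theorem existsUnique_symm_add_isAlt (P : M →ₗ[R] M →ₗ[R] R) :
    ∃! gB : (M →ₗ[R] M →ₗ[R] R) × (M →ₗ[R] M →ₗ[R] R),
      (∀ x y, gB.1 x y = gB.1 y x) ∧ gB.2.IsAlt ∧ gB.1 + gB.2 = P := by
  have hsymm : ∀ x y, (⅟(2 : R) • (P + P.flip)) x y = (⅟(2 : R) • (P + P.flip)) y x := by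
    intro x y
    simp only [LinearMap.smul_apply, LinearMap.add_apply, LinearMap.flip_apply, add_comm]
  have halt : (⅟(2 : R) • (P - P.flip)).IsAlt := fun x => by simp
  have hsum : ⅟(2 : R) • (P + P.flip) + ⅟(2 : R) • (P - P.flip) = P := by
    ext x y
    simp only [LinearMap.add_apply, LinearMap.smul_apply, LinearMap.sub_apply,
      LinearMap.flip_apply, smul_eq_mul]
    linear_combination P x y * invOf_mul_self (2 : R)
  refine ⟨(⅟(2 : R) • (P + P.flip), ⅟(2 : R) • (P - P.flip)), ⟨hsymm, halt, hsum⟩,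
    fun gB ⟨hg, hB, hgB⟩ => ?_⟩
  obtain ⟨h1, h2⟩ := eq_of_symm_add_isAlt hg hB hsymm halt (hgB.trans hsum.symm)
  exact Prod.ext h1 h2

end SymmetricAlternating

section GeneralisedMetric

variable {W : Type*} [AddCommGroup W] [Module ℝ W]

lemma genGraph_eq_graph (P : W →ₗ[ℝ] W →ₗ[ℝ] ℝ) : genGraph P = P.graph :=
  (LinearMap.graph_eq_range_prod P).symm

lemma genBeta_self (u : W × Dual ℝ W) : genBeta u u = u.2 u.1 := by
  rw [genBeta, add_self_div_two]

lemma genBeta_pos_on_graph_iff (P : W →ₗ[ℝ] W →ₗ[ℝ] ℝ) :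
    (∀ u ∈ P.graph, u ≠ 0 → 0 < genBeta u u) ↔ ∀ x, x ≠ 0 → 0 < P x x := by
  constructor
  · intro hpos x hx
    simpa [genBeta_self] using hpos (x, P x) rfl fun h => hx (congrArg Prod.fst h)
  · rintro hpos ⟨x, ξ⟩ (rfl : ξ = P x) hne
    have hx : x ≠ 0 := by
      rintro rfl
      simp at hne
    rw [genBeta_self]
    exact hpos x hx

lemma fst_injective_of_genBeta_pos {V : Submodule ℝ (W × Dual ℝ W)}
    (hpos : ∀ u ∈ V, u ≠ 0 → 0 < genBeta u u) :
    Function.Injective ((LinearMap.fst ℝ W (Dual ℝ W)).comp V.subtype) := by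
  rw [injective_iff_map_eq_zero]
  intro v (hv : (v : W × Dual ℝ W).1 = 0)
  by_contra hne
  have h := hpos v v.2 (by simpa using hne)
  rw [genBeta_self, hv, map_zero] at h
  exact lt_irrefl _ h

lemma exists_eq_graph_of_genBeta_pos [FiniteDimensional ℝ W] {V : Submodule ℝ (W × Dual ℝ W)}
    (hV : finrank ℝ V = finrank ℝ W) (hpos : ∀ u ∈ V, u ≠ 0 → 0 < genBeta u u) :
    ∃ P : W →ₗ[ℝ] W →ₗ[ℝ] ℝ, V = P.graph := by
  have hinj := fst_injective_of_genBeta_pos hpos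
  have hsurj := (LinearMap.injective_iff_surjective_of_finrank_eq_finrank (V := V) hV).1 hinj
  exact Submodule.exists_eq_graph ⟨hinj, hsurj⟩

end GeneralisedMetric

/-- Maximal (`n`-dimensional) `β`-positive definite subspaces
`V⁺ ⊆ W ⊕ W*` (generalised Riemannian metrics) correspond bijectively to pairs `(g, B)`
of a positive definite symmetric bilinear form `g` and an alternating bilinear form `B`
on `W`, via `V⁺ = {x ⊕ (g(x,·) + B(x,·))}`. -/
theorem generalised_metric_iff_pair (n : ℕ) (W : Type*) [AddCommGroup W] [Module ℝ W]
    [FiniteDimensional ℝ W] (hn : Module.finrank ℝ W = n) :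
    (∀ V : Submodule ℝ (W × Module.Dual ℝ W),
      Module.finrank ℝ V = n → (∀ u ∈ V, u ≠ 0 → 0 < genBeta u u) →
      ∃! gB : (W →ₗ[ℝ] W →ₗ[ℝ] ℝ) × (W →ₗ[ℝ] W →ₗ[ℝ] ℝ),
        (∀ x y : W, gB.1 x y = gB.1 y x) ∧ (∀ x : W, x ≠ 0 → 0 < gB.1 x x) ∧
        gB.2.IsAlt ∧ V = genGraph (gB.1 + gB.2)) ∧
    (∀ g B : W →ₗ[ℝ] W →ₗ[ℝ] ℝ,
      (∀ x y : W, g x y = g y x) → (∀ x : W, x ≠ 0 → 0 < g x x) → B.IsAlt →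
      Module.finrank ℝ (genGraph (g + B)) = n ∧
      (∀ u ∈ genGraph (g + B), u ≠ 0 → 0 < genBeta u u)) := by
  simp only [genGraph_eq_graph]
  refine ⟨fun V hV hpos => ?_, fun g B _ hg hB => ⟨?_, ?_⟩⟩
  · obtain ⟨P, rfl⟩ := exists_eq_graph_of_genBeta_pos (hV.trans hn.symm) hpos
    have hP := (genBeta_pos_on_graph_iff P).1 hpos
    obtain ⟨⟨g, B⟩, ⟨hg, hB, rfl⟩, huniq⟩ := existsUnique_symm_add_isAlt P
    refine ⟨(g, B), ⟨hg, fun x hx => hB.add_apply_self x ▸ hP x hx, hB, rfl⟩, ?_⟩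
    rintro gB' ⟨hg', -, hB', hgraph⟩
    exact huniq gB' ⟨hg', hB', (LinearMap.graph_injective hgraph).symm⟩
  · rw [genGraph_eq_graph, LinearMap.finrank_graph, hn]
  · exact (genBeta_pos_on_graph_iff _).2 fun x hx => (hB.add_apply_self x).symm ▸ hg x hx
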